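/- arXiv:2505.00298 — 4 statements merged into one kernel-verified Lean document; each statement's English description precedes it below -/
import Mathlib

section
/- Let D be a digraph of order n and let k be an integer with max{δ⁰(D)+1, 3} ≤ k ≤ n, where δ⁰(D) = min{δ⁺(D), δ⁻(D)} is the minimum semi-degree of D. Then τ_k(D) = 0. -/
/-- A digraph: no loops, no parallel arcs (arcs are a set of ordered pairs). -/
structure Dgraph (V : Type*) where
  Adj : V → V → Prop
  loopless : ∀ v, ¬ Adj v v

namespace Dgraph

variable {V : Type*}

/-- A subdigraph of `D`: a vertex set together with an arc set contained in that of `D`,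
whose arcs join vertices of the vertex set. -/
structure Sub (D : Dgraph V) where
  verts : Set V
  Adj : V → V → Prop
  adj_sub : ∀ ⦃u v : V⦄, Adj u v → D.Adj u v
  mem_left : ∀ ⦃u v : V⦄, Adj u v → u ∈ verts
  mem_right : ∀ ⦃u v : V⦄, Adj u v → v ∈ verts

/-- The degree of a vertex in a subdigraph: out-degree plus in-degree. -/
noncomputable def Sub.deg {D : Dgraph V} (T : D.Sub) (v : V) : ℕ :=
  {w | T.Adj v w}.ncard + {w | T.Adj w v}.ncard

/-- `T` is an out-tree rooted at `r`: `r` belongs to `T`, has in-degree zero, every other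
vertex of `T` has in-degree exactly one, and every vertex of `T` is reachable from `r`. -/
def Sub.IsOutTree {D : Dgraph V} (T : D.Sub) (r : V) : Prop :=
  r ∈ T.verts ∧ (∀ w, ¬ T.Adj w r) ∧
    (∀ v ∈ T.verts, v ≠ r → ∃! u, T.Adj u v) ∧
    ∀ v ∈ T.verts, Relation.ReflTransGen T.Adj r v

/-- A pendant `(S,r)`-tree in `D`: an out-tree rooted at `r` containing `S` in which every
vertex of `S` has degree one. -/
def IsPendantTree (D : Dgraph V) (S : Set V) (r : V) (T : D.Sub) : Prop :=
  T.IsOutTree r ∧ S ⊆ T.verts ∧ ∀ s ∈ S, T.deg s = 1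

/-- Two subdigraphs are internally disjoint (w.r.t. `S`) if they are arc-disjoint and their
common vertex set is exactly `S`. -/
def InternallyDisjoint (D : Dgraph V) (S : Set V) (T₁ T₂ : D.Sub) : Prop :=
  (∀ u v, ¬ (T₁.Adj u v ∧ T₂.Adj u v)) ∧ T₁.verts ∩ T₂.verts = S

/-- `τ_{S,r}(D)`: the maximum number of pairwise internally-disjoint pendant `(S,r)`-trees. -/
noncomputable def tauSr (D : Dgraph V) (S : Set V) (r : V) : ℕ :=
  sSup {m : ℕ | ∃ f : Fin m → D.Sub,
    (∀ i, D.IsPendantTree S r (f i)) ∧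
    ∀ i j, i ≠ j → D.InternallyDisjoint S (f i) (f j)}

/-- `τ_k(D)`: the minimum of `τ_{S,r}(D)` over all `S ⊆ V(D)` with `|S| = k` and `r ∈ S`. -/
noncomputable def tauK (D : Dgraph V) (k : ℕ) : ℕ :=
  sInf {m : ℕ | ∃ (S : Set V) (r : V), S.ncard = k ∧ r ∈ S ∧ m = D.tauSr S r}

end Dgraph

/-!
Take a vertex `v` of out-degree `δ⁺(D) ≤ k - 1` and a `k`-set `S ⊇ {v} ∪ N⁺(v)` with root `v`.
In a pendant `(S,v)`-tree the root has a single child; it is an out-neighbour of `v`, hence in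
`S`, hence a leaf, so the tree has two vertices although it must contain the `k ≥ 3` vertices
of `S`. Dually, if `δ⁻(D) ≤ k - 1`, take `S ⊇ {v} ∪ N⁻(v)` and any root `r ∈ S \ {v}`: the
parent of `v` lies in `S`, so it has degree one and no parent, hence it is the root `r`, and
we are back in the first situation.
-/

namespace Dgraph

variable {V : Type*} {D : Dgraph V}

section Degree

variable [Finite V] {T : D.Sub} {u v w : V}

lemma Sub.not_adj_of_deg_eq_one_of_adj_in (hv : T.deg v = 1) (huv : T.Adj u v) :
    ¬ T.Adj v w := by
  intro hvw
  have hout : 0 < {x | T.Adj v x}.ncard := (Set.ncard_pos).mpr ⟨w, hvw⟩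
  have hin : 0 < {x | T.Adj x v}.ncard := (Set.ncard_pos).mpr ⟨u, huv⟩
  rw [Sub.deg] at hv
  omega

lemma Sub.eq_of_deg_eq_one_of_adj_out (hv : T.deg v = 1) (hvu : T.Adj v u) (hvw : T.Adj v w) :
    u = w := by
  have hout : {x | T.Adj v x}.ncard ≤ 1 := by
    rw [Sub.deg] at hv
    omega
  exact (Set.ncard_le_one_iff).mp hout hvu hvw

end Degree

lemma Sub.IsOutTree.verts_subset_pair {T : D.Sub} {r y : V} (hT : T.IsOutTree r)
    (hr : ∀ w, T.Adj r w → w = y) (hy : ∀ w, ¬ T.Adj y w) : T.verts ⊆ {r, y} := by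
  intro z hz
  have hrz := hT.2.2.2 z hz
  clear hz
  induction hrz with
  | refl => exact Or.inl rfl
  | tail _ hxz ih =>
    rcases ih with rfl | rfl
    · exact Or.inr (hr _ hxz)
    · exact absurd hxz (hy _)

lemma IsPendantTree.ncard_le_two_of_adj [Finite V] {S : Set V} {r y : V} {T : D.Sub}
    (hT : D.IsPendantTree S r T) (hr : r ∈ S) (hy : y ∈ S) (hry : T.Adj r y) : S.ncard ≤ 2 := by
  obtain ⟨hTree, hST, hdeg⟩ := hT
  have hverts : T.verts ⊆ {r, y} := hTree.verts_subset_pair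
    (fun _ hrw => (Sub.eq_of_deg_eq_one_of_adj_out (hdeg r hr) hry hrw).symm)
    (fun _ => Sub.not_adj_of_deg_eq_one_of_adj_in (hdeg y hy) hry)
  calc S.ncard ≤ ({r, y} : Set V).ncard := Set.ncard_le_ncard (hST.trans hverts)
    _ ≤ 2 := (Set.ncard_insert_le _ _).trans (by simp)

lemma not_isPendantTree_of_outNbhd_subset [Finite V] {S : Set V} {r : V} (hr : r ∈ S)
    (hN : {w | D.Adj r w} ⊆ S) (hS : 3 ≤ S.ncard) (T : D.Sub) : ¬ D.IsPendantTree S r T := by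
  intro hT
  obtain ⟨s, hs, hsr⟩ := Set.exists_ne_of_one_lt_ncard (by omega : 1 < S.ncard) r
  obtain ⟨y, hry, -⟩ := (hT.1.2.2.2 s (hT.2.1 hs)).cases_head.resolve_left hsr.symm
  have := hT.ncard_le_two_of_adj hr (hN (T.adj_sub hry)) hry
  omega

lemma not_isPendantTree_of_inNbhd_subset [Finite V] {S : Set V} {v r : V} (hv : v ∈ S)
    (hr : r ∈ S) (hrv : r ≠ v) (hN : {w | D.Adj w v} ⊆ S) (hS : 3 ≤ S.ncard) (T : D.Sub) :
    ¬ D.IsPendantTree S r T := by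
  intro hT
  obtain ⟨u, huv, -⟩ := hT.1.2.2.1 v (hT.2.1 hv) hrv.symm
  have huS : u ∈ S := hN (T.adj_sub huv)
  obtain rfl : u = r := by
    by_contra hur
    obtain ⟨w, hwu, -⟩ := hT.1.2.2.1 u (T.mem_left huv) hur
    exact Sub.not_adj_of_deg_eq_one_of_adj_in (hT.2.2 u huS) hwu huv
  have := hT.ncard_le_two_of_adj hr hv huv
  omega

lemma exists_not_isPendantTree_of_outdeg [Finite V] {k : ℕ} {v : V} (hk : 3 ≤ k)
    (hkV : k ≤ Nat.card V) (hv : {w | D.Adj v w}.ncard + 1 ≤ k) :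
    ∃ (S : Set V) (r : V), S.ncard = k ∧ r ∈ S ∧ ∀ T, ¬ D.IsPendantTree S r T := by
  obtain ⟨S, hvS, -, hS⟩ := Set.exists_subsuperset_card_eq
    (Set.subset_univ (insert v {w | D.Adj v w})) ((Set.ncard_insert_le _ _).trans hv)
    (by rwa [Set.ncard_univ])
  exact ⟨S, v, hS, hvS (Set.mem_insert _ _), not_isPendantTree_of_outNbhd_subset
    (hvS (Set.mem_insert _ _)) ((Set.subset_insert _ _).trans hvS) (hS ▸ hk)⟩

lemma exists_not_isPendantTree_of_indeg [Finite V] {k : ℕ} {v : V} (hk : 3 ≤ k)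
    (hkV : k ≤ Nat.card V) (hv : {w | D.Adj w v}.ncard + 1 ≤ k) :
    ∃ (S : Set V) (r : V), S.ncard = k ∧ r ∈ S ∧ ∀ T, ¬ D.IsPendantTree S r T := by
  obtain ⟨S, hvS, -, hS⟩ := Set.exists_subsuperset_card_eq
    (Set.subset_univ (insert v {w | D.Adj w v})) ((Set.ncard_insert_le _ _).trans hv)
    (by rwa [Set.ncard_univ])
  obtain ⟨r, hr, hrv⟩ := Set.exists_ne_of_one_lt_ncard (by omega : 1 < S.ncard) v
  exact ⟨S, r, hS, hr, not_isPendantTree_of_inNbhd_subset (hvS (Set.mem_insert _ _)) hr hrv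
    ((Set.subset_insert _ _).trans hvS) (hS ▸ hk)⟩

lemma tauSr_eq_zero_of_forall_not_isPendantTree {S : Set V} {r : V}
    (h : ∀ T, ¬ D.IsPendantTree S r T) : D.tauSr S r = 0 := by
  refine Nat.eq_zero_of_le_zero (csSup_le' ?_)
  rintro m ⟨f, hf, -⟩
  by_contra! hm
  exact h _ (hf ⟨0, hm⟩)

lemma tauK_eq_zero_of_forall_not_isPendantTree {S : Set V} {r : V} {k : ℕ} (hS : S.ncard = k)
    (hr : r ∈ S) (h : ∀ T, ¬ D.IsPendantTree S r T) : D.tauK k = 0 :=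
  Nat.eq_zero_of_le_zero <|
    Nat.sInf_le ⟨S, r, hS, hr, (tauSr_eq_zero_of_forall_not_isPendantTree h).symm⟩

end Dgraph

/-- If `max{δ⁰(D) + 1, 3} ≤ k ≤ n`, then `τ_k(D) = 0`. -/
theorem tauK_eq_zero_of_large_k {V : Type*} [Fintype V] {n k : ℕ}
    (hn : Fintype.card V = n) (hkn : k ≤ n) (D : Dgraph V)
    (hk : max (min (⨅ v : V, {w | D.Adj v w}.ncard) (⨅ v : V, {w | D.Adj w v}.ncard) + 1) 3 ≤ k) :
    D.tauK k = 0 := by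
  have hk3 : 3 ≤ k := le_of_max_le_right hk
  have hkV : k ≤ Nat.card V := by rwa [Nat.card_eq_fintype_card, hn]
  have : Nonempty V := Fintype.card_pos_iff.mp (by omega)
  have hδ := le_of_max_le_left hk
  rw [← min_add_add_right, min_le_iff] at hδ
  obtain ⟨S, r, hS, hr, hnone⟩ : ∃ (S : Set V) (r : V),
      S.ncard = k ∧ r ∈ S ∧ ∀ T, ¬ D.IsPendantTree S r T := by
    rcases hδ with hout | hin
    · obtain ⟨v, hv⟩ := exists_eq_ciInf_of_finite (f := fun v => {w | D.Adj v w}.ncard)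
      exact D.exists_not_isPendantTree_of_outdeg hk3 hkV (hv ▸ hout)
    · obtain ⟨v, hv⟩ := exists_eq_ciInf_of_finite (f := fun v => {w | D.Adj w v}.ncard)
      exact D.exists_not_isPendantTree_of_indeg hk3 hkV (hv ▸ hin)
  exact D.tauK_eq_zero_of_forall_not_isPendantTree hS hr hnone
end

section
/- Let k and n be integers with 3 ≤ k ≤ n, let ↔K_n be the complete symmetric digraph on n vertices, and let e be any arc of ↔K_n. Then τ_k(↔K_n − e) ≤ n − k − 1, where ↔K_n − e denotes the digraph obtained from ↔K_n by deleting the arc e. -/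
/-!
Take `S ∋ a` of size `k` avoiding `b` (or `S = V` when `k = n`) and root the trees at `a`.
Since `|S| ≥ 3`, the root of a pendant `(S,a)`-tree has a single child, and that child is
not in `S`: otherwise the tree would consist of `a` and this child only. Internally disjoint
trees have different such children, and the child is never `b` because the arc `ab` is
missing, so there are at most `n - (k + 1)` trees.
-/

namespace Dgraph

variable {V : Type*} {D : Dgraph V}

namespace Sub

variable {T : D.Sub} {r : V}

lemma IsOutTree.exists_outNbhd_eq_singleton (hT : T.IsOutTree r) (hr : T.deg r = 1) :
    ∃ c, {w | T.Adj r w} = {c} := by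
  have hin : {w | T.Adj w r} = ∅ := Set.eq_empty_of_forall_notMem hT.2.1
  rw [deg, hin, Set.ncard_empty, add_zero] at hr
  exact Set.ncard_eq_one.mp hr

lemma not_adj_of_deg_eq_one_of_adj [Finite V] {u v : V} (hv : T.deg v = 1) (huv : T.Adj u v)
    (w : V) : ¬ T.Adj v w := by
  intro hvw
  have hin : 0 < {x | T.Adj x v}.ncard := (Set.ncard_pos).mpr ⟨u, huv⟩
  have hout : 0 < {x | T.Adj v x}.ncard := (Set.ncard_pos).mpr ⟨w, hvw⟩
  rw [deg] at hv
  omega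

lemma IsOutTree.verts_subset_pair_s6 {c : V} (hT : T.IsOutTree r) (hr : ∀ w, T.Adj r w → w = c)
    (hc : ∀ w, ¬ T.Adj c w) : T.verts ⊆ {r, c} := by
  intro v hv
  have hrv := hT.2.2.2 v hv
  clear hv
  induction hrv with
  | refl => exact .inl rfl
  | tail _ hxy ih =>
    rcases ih with rfl | rfl
    · exact .inr (hr _ hxy)
    · exact absurd hxy (hc _)

end Sub

lemma IsPendantTree.exists_adj_root_notMem [Finite V] {S : Set V} {r : V} {T : D.Sub}
    (hT : D.IsPendantTree S r T) (hS : 3 ≤ S.ncard) (hr : r ∈ S) :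
    ∃ c, T.Adj r c ∧ c ∉ S := by
  obtain ⟨hout, hST, hdeg⟩ := hT
  obtain ⟨c, hc⟩ := hout.exists_outNbhd_eq_singleton (hdeg r hr)
  have hrc : T.Adj r c := (hc.symm ▸ Set.mem_singleton c : c ∈ {w | T.Adj r w})
  refine ⟨c, hrc, fun hcS => ?_⟩
  have hsub : S ⊆ {r, c} :=
    hST.trans <| hout.verts_subset_pair_s6 (fun w hw => (hc ▸ hw : w ∈ ({c} : Set V)))
      (Sub.not_adj_of_deg_eq_one_of_adj (hdeg c hcS) hrc)
  have := (Set.ncard_le_ncard hsub).trans (Set.ncard_insert_le r {c})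
  rw [Set.ncard_singleton] at this
  omega

lemma tauSr_le_ncard_outNbhd_diff [Finite V] {S : Set V} {r : V} (hS : 3 ≤ S.ncard)
    (hr : r ∈ S) : D.tauSr S r ≤ {c | D.Adj r c ∧ c ∉ S}.ncard := by
  refine csSup_le ⟨0, fun i => i.elim0, fun i => i.elim0, fun i => i.elim0⟩ ?_
  rintro m ⟨f, hpen, hdisj⟩
  choose child hadj hnotMem using fun i => (hpen i).exists_adj_root_notMem hS hr
  have hinj : Function.Injective child := by
    intro i j hij
    by_contra hne
    have hshared : child i ∈ (f i).verts ∩ (f j).verts :=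
      ⟨(f i).mem_right (hadj i), hij ▸ (f j).mem_right (hadj j)⟩
    rw [(hdisj i j hne).2] at hshared
    exact hnotMem i hshared
  simpa using Set.ncard_le_ncard_of_injOn (s := Set.univ) (t := {c | D.Adj r c ∧ c ∉ S}) child
    (fun i _ => ⟨(f i).adj_sub (hadj i), hnotMem i⟩) hinj.injOn

end Dgraph

lemma Set.exists_mem_notMem_ncard_eq {α : Type*} [Finite α] {a b : α} (hab : a ≠ b) {k : ℕ}
    (hk : 1 ≤ k) (hkn : k < Nat.card α) : ∃ S : Set α, a ∈ S ∧ b ∉ S ∧ S.ncard = k := by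
  obtain ⟨S, haS, hSb, hSk⟩ := Set.exists_subsuperset_card_eq (n := k)
    (Set.singleton_subset_iff.mpr (Set.mem_compl_singleton_iff.mpr hab))
    (by rwa [Set.ncard_singleton]) (by rw [Set.ncard_compl, Set.ncard_singleton]; omega)
  exact ⟨S, Set.singleton_subset_iff.mp haS, fun hb => hSb hb rfl, hSk⟩

/-- For `3 ≤ k ≤ n` and any arc `e = (a, b)` of the complete symmetric digraph `↔K_n`,
`τ_k(↔K_n − e) ≤ n - k - 1`. -/
theorem tauK_complete_minus_arc {V : Type*} [Fintype V] {n k : ℕ}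
    (hn : Fintype.card V = n) (hk3 : 3 ≤ k) (hkn : k ≤ n) (a b : V) (hab : a ≠ b) :
    (Dgraph.mk (fun x y => x ≠ y ∧ ¬ (x = a ∧ y = b)) (fun _ h => h.1 rfl)).tauK k
      ≤ n - k - 1 := by
  set D : Dgraph V := Dgraph.mk (fun x y => x ≠ y ∧ ¬ (x = a ∧ y = b)) (fun _ h => h.1 rfl)
  rw [← Nat.card_eq_fintype_card] at hn
  obtain ⟨S, haS, hSk, hbS⟩ : ∃ S : Set V, a ∈ S ∧ S.ncard = k ∧ (b ∈ S → k = n) := by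
    rcases hkn.eq_or_lt with rfl | hlt
    · exact ⟨Set.univ, trivial, by rw [Set.ncard_univ, hn], fun _ => rfl⟩
    · obtain ⟨S, haS, hbS, hSk⟩ := Set.exists_mem_notMem_ncard_eq hab (by omega) (hn ▸ hlt)
      exact ⟨S, haS, hSk, fun hb => absurd hb hbS⟩
  have hout : {c | D.Adj a c ∧ c ∉ S} ⊆ (insert b S)ᶜ := by
    rintro c ⟨⟨-, hcb⟩, hcS⟩ (rfl | hc)
    exacts [hcb ⟨rfl, rfl⟩, hcS hc]
  have hcount : n - (insert b S).ncard ≤ n - k - 1 := by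
    by_cases hb : b ∈ S
    · have := Set.ncard_le_ncard (Set.subset_insert b S)
      have := hbS hb
      omega
    · rw [Set.ncard_insert_of_notMem hb, hSk]
      omega
  calc D.tauK k ≤ D.tauSr S a := Nat.sInf_le ⟨S, a, hSk, haS, rfl⟩
    _ ≤ {c | D.Adj a c ∧ c ∉ S}.ncard := D.tauSr_le_ncard_outNbhd_diff (hSk ▸ hk3) haS
    _ ≤ (insert b S)ᶜ.ncard := Set.ncard_le_ncard hout
    _ = n - (insert b S).ncard := by rw [Set.ncard_compl, hn]
    _ ≤ n - k - 1 := hcount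
end

section
/- Let k and n be integers with 3 ≤ k ≤ n and let D be a digraph of order n. Then τ_k(D) ≤ min over all S ⊆ V(D) with |S| = k and all r ∈ S of ⌊ |(V(D)∖S, S∖{r})_D| / (k−1) ⌋, where (A, B)_D denotes the set of arcs of D going from A to B. -/
/-!
Every vertex `s ∈ S \ {r}` is a leaf of a pendant `(S,r)`-tree, and its parent lies outside `S`:
a parent in `S \ {r}` would not be a leaf, and if the parent were `r`, then `s` would be the only
child of `r`, so no third vertex of `S` could be reached. Hence each of `m` pendant trees uses
`|S| - 1` distinct arcs of `(V(D) \ S, S \ {r})_D`, and arc-disjointness gives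
`m (|S| - 1) ≤ |(V(D) \ S, S \ {r})_D|`.
-/

namespace Dgraph

variable {V : Type*} {D : Dgraph V}

/-- The arc set `(A, B)_D`. -/
def arcsFromTo (D : Dgraph V) (A B : Set V) : Set (V × V) :=
  {p | D.Adj p.1 p.2 ∧ p.1 ∈ A ∧ p.2 ∈ B}

namespace Sub

variable [Finite V] {T : D.Sub} {v : V}

lemma eq_of_adj_of_adj_of_deg_eq_one (h : T.deg v = 1) {x y : V} (hx : T.Adj v x)
    (hy : T.Adj v y) : x = y := by
  have hout : {w | T.Adj v w}.ncard ≤ 1 := by rw [deg] at h; omega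
  exact (Set.ncard_le_one_iff (Set.toFinite _)).1 hout hx hy

lemma not_adj_of_adj_of_deg_eq_one (h : T.deg v = 1) {w x : V} (hw : T.Adj w v) :
    ¬ T.Adj v x := by
  intro hx
  have hout : 0 < {y | T.Adj v y}.ncard := (Set.ncard_pos (Set.toFinite _)).2 ⟨x, hx⟩
  have hin : 0 < {y | T.Adj y v}.ncard := (Set.ncard_pos (Set.toFinite _)).2 ⟨w, hw⟩
  rw [deg] at h
  omega

end Sub

namespace IsPendantTree

variable [Finite V] {S : Set V} {r s : V} {T : D.Sub}

lemma not_adj_of_mem (hT : D.IsPendantTree S r T) (hs : s ∈ S) (hsr : s ≠ r) (x : V) :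
    ¬ T.Adj s x := by
  obtain ⟨⟨-, -, hparent, -⟩, hST, hdeg⟩ := hT
  obtain ⟨u, hu, -⟩ := hparent s (hST hs) hsr
  exact Sub.not_adj_of_adj_of_deg_eq_one (hdeg s hs) hu

lemma notMem_of_adj (hT : D.IsPendantTree S r T) (hS : 2 < S.ncard) (hr : r ∈ S)
    (hs : s ∈ S) (hsr : s ≠ r) {u : V} (hu : T.Adj u s) : u ∉ S := by
  intro huS
  obtain rfl | hur := eq_or_ne u r
  · obtain ⟨s', hs'S, hs'⟩ : ∃ s' ∈ S, s' ∉ ({u, s} : Set V) :=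
      Set.exists_mem_notMem_of_ncard_lt_ncard
        ((Set.ncard_insert_le _ _).trans_lt (by rwa [Set.ncard_singleton]))
    simp only [Set.mem_insert_iff, Set.mem_singleton_iff, not_or] at hs'
    obtain ⟨hs'u, hs's⟩ := hs'
    have hreach := hT.1.2.2.2 s' (hT.2.1 hs'S)
    rcases hreach.cases_head with rfl | ⟨c, huc, hcs'⟩
    · exact hs'u rfl
    obtain rfl : c = s := Sub.eq_of_adj_of_adj_of_deg_eq_one (hT.2.2 u hr) huc hu
    rcases hcs'.cases_head with rfl | ⟨d, hcd, -⟩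
    · exact hs's rfl
    · exact hT.not_adj_of_mem hs hsr d hcd
  · exact hT.not_adj_of_mem huS hur s hu

end IsPendantTree

lemma mul_ncard_le_ncard_arcsFromTo [Finite V] {S : Set V} {r : V} (hS : 2 < S.ncard)
    (hr : r ∈ S) {m : ℕ} (f : Fin m → D.Sub) (hf : ∀ i, D.IsPendantTree S r (f i))
    (hdisj : ∀ i j, i ≠ j → ∀ u v, ¬ ((f i).Adj u v ∧ (f j).Adj u v)) :
    m * (S.ncard - 1) ≤ (D.arcsFromTo Sᶜ (S \ {r})).ncard := by
  have hparent : ∀ (i : Fin m) (s : ↥(S \ {r})), ∃ u, (f i).Adj u s :=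
    fun i s ↦ ((hf i).1.2.2.1 s ((hf i).2.1 s.2.1) s.2.2).exists
  choose parent hparent using hparent
  let arc (p : Fin m × ↥(S \ {r})) : D.arcsFromTo Sᶜ (S \ {r}) :=
    ⟨(parent p.1 p.2, p.2), (f p.1).adj_sub (hparent p.1 p.2),
      (hf p.1).notMem_of_adj hS hr p.2.2.1 p.2.2.2 (hparent p.1 p.2), p.2.2⟩
  have harc : Function.Injective arc := by
    rintro ⟨i, s⟩ ⟨j, t⟩ h
    obtain ⟨hparent_eq, hst⟩ : parent i s = parent j t ∧ (s : V) = t :=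
      Prod.mk.inj (congrArg Subtype.val h)
    obtain rfl := Subtype.ext hst
    by_contra hij
    exact hdisj i j (by simpa using hij) _ _ ⟨hparent i s, hparent_eq ▸ hparent j s⟩
  simpa [Nat.card_coe_set_eq, Set.ncard_sdiff_singleton_of_mem hr] using
    Nat.card_le_card_of_injective arc harc

lemma tauSr_le [Finite V] {S : Set V} {r : V} (hS : 2 < S.ncard) (hr : r ∈ S) :
    D.tauSr S r ≤ (D.arcsFromTo Sᶜ (S \ {r})).ncard / (S.ncard - 1) := by
  refine csSup_le' ?_
  rintro m ⟨f, hf, hdisj⟩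
  rw [Nat.le_div_iff_mul_le (by omega)]
  exact mul_ncard_le_ncard_arcsFromTo hS hr f hf fun i j hij ↦ (hdisj i j hij).1

lemma tauK_le_tauSr {k : ℕ} {S : Set V} {r : V} (hS : S.ncard = k) (hr : r ∈ S) :
    D.tauK k ≤ D.tauSr S r :=
  Nat.sInf_le ⟨S, r, hS, hr, rfl⟩

end Dgraph

theorem tauK_le_arc_cut_bound_general {V : Type*} [Fintype V] {k : ℕ}
    (hk3 : 3 ≤ k) (D : Dgraph V) :
    ∀ S : Set V, S.ncard = k → ∀ r ∈ S,
      D.tauK k ≤ {p : V × V | D.Adj p.1 p.2 ∧ p.1 ∉ S ∧ p.2 ∈ S ∧ p.2 ≠ r}.ncard / (k - 1) := by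
  rintro S rfl r hr
  exact (D.tauK_le_tauSr rfl hr).trans (D.tauSr_le (by omega) hr)

/-- For `3 ≤ k ≤ n`, `τ_k(D)` is at most `⌊|(V(D) \ S, S \ {r})_D| / (k-1)⌋` for every `S`
with `|S| = k` and every `r ∈ S` (i.e. at most the minimum of these quantities). -/
theorem tauK_le_arc_cut_bound {V : Type*} [Fintype V] {n k : ℕ}
    (hn : Fintype.card V = n) (hk3 : 3 ≤ k) (hkn : k ≤ n) (D : Dgraph V) :
    ∀ S : Set V, S.ncard = k → ∀ r ∈ S,
      D.tauK k ≤ {p : V × V | D.Adj p.1 p.2 ∧ p.1 ∉ S ∧ p.2 ∈ S ∧ p.2 ≠ r}.ncard / (k - 1) :=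
  tauK_le_arc_cut_bound_general hk3 D
end

section
/- Let k and n be integers with 3 ≤ k ≤ n and let D be a digraph of order n. Then 0 ≤ τ_k(D) · τ_k(D^c) ≤ ⌊((n−k)/2)²⌋, where D^c is the complement digraph of D. -/
/-- The complement digraph of `D`. -/
def Dgraph.compl {V : Type*} (D : Dgraph V) : Dgraph V :=
  ⟨fun x y => x ≠ y ∧ ¬ D.Adj x y, fun _ h => h.1 rfl⟩

/-!
The root `r` of a pendant `(S,r)`-tree has degree one, and its unique out-neighbour cannot lie
in `S`: otherwise that neighbour, also of degree one, would be a leaf and the tree would be the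
single arc `r → x`, missing a third vertex of `S`. For a fixed pair `(S,r)` these out-neighbours
are pairwise distinct across a packing of `D` (internal disjointness) and across `D` and `Dᶜ`
(the arc `r → x` lies in exactly one of them), so
`τ_{S,r}(D) + τ_{S,r}(Dᶜ) ≤ n - k`, and AM–GM bounds the product.
-/

namespace Dgraph

variable {V : Type*} {D : Dgraph V} {S : Set V} {r : V}

def IsPendantPacking (D : Dgraph V) (S : Set V) (r : V) {ι : Type*} (f : ι → D.Sub) : Prop :=
  (∀ i, D.IsPendantTree S r (f i)) ∧ ∀ i j, i ≠ j → D.InternallyDisjoint S (f i) (f j)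

theorem tauSr_eq_sSup (D : Dgraph V) (S : Set V) (r : V) :
    D.tauSr S r = sSup {m | ∃ f : Fin m → D.Sub, D.IsPendantPacking S r f} :=
  rfl

theorem Sub.IsOutTree.ncard_inNeighbors {T : D.Sub} (hT : T.IsOutTree r) {v : V}
    (hv : v ∈ T.verts) (hvr : v ≠ r) : {w | T.Adj w v}.ncard = 1 := by
  obtain ⟨u, hu, huniq⟩ := hT.2.2.1 v hv hvr
  exact Set.ncard_eq_one.mpr ⟨u, Set.ext fun w => ⟨huniq w, fun h => h ▸ hu⟩⟩

namespace IsPendantTree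

variable {T : D.Sub}

theorem exists_outNeighbors_root_eq_singleton (hT : D.IsPendantTree S r T) (hr : r ∈ S) :
    ∃ x, {w | T.Adj r w} = {x} := by
  have hin : {w | T.Adj w r} = ∅ := Set.eq_empty_of_forall_notMem hT.1.2.1
  have hdeg := hT.2.2 r hr
  rw [Sub.deg, hin, Set.ncard_empty, add_zero] at hdeg
  exact Set.ncard_eq_one.mp hdeg

theorem outNeighbors_eq_empty [Finite V] (hT : D.IsPendantTree S r T) {s : V} (hs : s ∈ S)
    (hsr : s ≠ r) : {w | T.Adj s w} = ∅ := by
  have hdeg := hT.2.2 s hs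
  rw [Sub.deg, hT.1.ncard_inNeighbors (hT.2.1 hs) hsr] at hdeg
  exact (Set.ncard_eq_zero (Set.toFinite _)).mp (by omega)

theorem exists_adj_root_notMem_s12 [Finite V] (hT : D.IsPendantTree S r T) (hS : 3 ≤ S.ncard)
    (hr : r ∈ S) : ∃ x, T.Adj r x ∧ x ∉ S := by
  obtain ⟨x, hx⟩ := hT.exists_outNeighbors_root_eq_singleton hr
  have hrx : T.Adj r x := (Set.ext_iff.mp hx x).mpr rfl
  refine ⟨x, hrx, fun hxS => ?_⟩
  have hxr : x ≠ r := fun h => D.loopless r (T.adj_sub (h ▸ hrx))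
  have hx_leaf := hT.outNeighbors_eq_empty hxS hxr
  have hreach : ∀ v, Relation.ReflTransGen T.Adj r v → v ∈ ({r, x} : Set V) := by
    intro v hv
    induction hv with
    | refl => exact Or.inl rfl
    | tail _ hbc ih =>
      rcases ih with rfl | rfl
      · exact Or.inr ((Set.ext_iff.mp hx _).mp hbc)
      · exact ((Set.ext_iff.mp hx_leaf _).mp hbc).elim
  have hSsub : S ⊆ {r, x} := fun s hs => hreach s (hT.1.2.2.2 s (hT.2.1 hs))
  have hcard := (Set.ncard_le_ncard hSsub).trans (Set.ncard_insert_le r {x})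
  rw [Set.ncard_singleton] at hcard
  omega

end IsPendantTree

theorem IsPendantPacking.exists_injective_adj_root [Finite V] {ι : Type*} {f : ι → D.Sub}
    (hf : D.IsPendantPacking S r f) (hS : 3 ≤ S.ncard) (hr : r ∈ S) :
    ∃ x : ι → V, Function.Injective x ∧ ∀ i, D.Adj r (x i) ∧ x i ∉ S := by
  choose x hx hxS using fun i => (hf.1 i).exists_adj_root_notMem_s12 hS hr
  refine ⟨x, fun i j hij => ?_, fun i => ⟨(f i).adj_sub (hx i), hxS i⟩⟩
  by_contra hne
  have hmem : x i ∈ (f i).verts ∩ (f j).verts :=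
    ⟨(f i).mem_right (hx i), hij ▸ (f j).mem_right (hx j)⟩
  rw [(hf.2 i j hne).2] at hmem
  exact hxS i hmem

theorem IsPendantPacking.card_add_card_add_ncard_le [Finite V] {ι κ : Type*}
    {f : ι → D.Sub} {g : κ → D.compl.Sub} (hf : D.IsPendantPacking S r f)
    (hg : D.compl.IsPendantPacking S r g) (hS : 3 ≤ S.ncard) (hr : r ∈ S) :
    Nat.card ι + Nat.card κ + S.ncard ≤ Nat.card V := by
  obtain ⟨x, hx_inj, hx⟩ := hf.exists_injective_adj_root hS hr
  obtain ⟨y, hy_inj, hy⟩ := hg.exists_injective_adj_root hS hr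
  have hxy : ∀ i j, x i ≠ y j := fun i j h => (hy j).1.2 (h ▸ (hx i).1)
  have hinj := hx_inj.sumElim hy_inj hxy
  have : Finite ι := .of_injective x hx_inj
  have : Finite κ := .of_injective y hy_inj
  have hdisj : Disjoint (Set.range (Sum.elim x y)) S := by
    rw [Set.disjoint_left]
    rintro _ ⟨i | j, rfl⟩
    exacts [(hx i).2, (hy j).2]
  have hcard := Set.ncard_le_ncard (Set.subset_univ (Set.range (Sum.elim x y) ∪ S))
  rwa [Set.ncard_union_eq hdisj, Set.ncard_range_of_injective hinj, Nat.card_sum,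
    Set.ncard_univ] at hcard

theorem tauSr_add_tauSr_compl_add_ncard_le [Finite V] (D : Dgraph V) (hS : 3 ≤ S.ncard)
    (hr : r ∈ S) : D.tauSr S r + D.compl.tauSr S r + S.ncard ≤ Nat.card V := by
  have hempty : ∀ D' : Dgraph V, D'.IsPendantPacking S r (Fin.elim0 : Fin 0 → D'.Sub) :=
    fun _ => ⟨fun i => i.elim0, fun i => i.elim0⟩
  have hmem : ∀ D' : Dgraph V,
      ∃ f : Fin (D'.tauSr S r) → D'.Sub, D'.IsPendantPacking S r f := by
    intro D'
    rw [tauSr_eq_sSup]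
    refine Nat.sSup_mem (s := {m | ∃ f : Fin m → D'.Sub, D'.IsPendantPacking S r f})
      ⟨0, Fin.elim0, hempty D'⟩ ⟨Nat.card V, ?_⟩
    rintro m ⟨f, hf⟩
    obtain ⟨x, hx_inj, -⟩ := hf.exists_injective_adj_root hS hr
    simpa using Nat.card_le_card_of_injective x hx_inj
  obtain ⟨f, hf⟩ := hmem D
  obtain ⟨g, hg⟩ := hmem D.compl
  simpa using hf.card_add_card_add_ncard_le hg hS hr

end Dgraph

theorem Nat.mul_le_floor_sq_half_sub {a b k n : ℕ} (h : a + b + k ≤ n) :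
    a * b ≤ ⌊(((n : ℝ) - k) / 2) ^ 2⌋₊ := by
  apply Nat.le_floor
  have h' : (a : ℝ) + b ≤ n - k := by
    have : ((a + b + k : ℕ) : ℝ) ≤ n := by exact_mod_cast h
    push_cast at this
    linarith
  push_cast
  nlinarith [sq_nonneg ((a : ℝ) - b), (Nat.cast_nonneg (a + b) : (0 : ℝ) ≤ (a + b : ℕ))]

/-- Nordhaus–Gaddum: for `3 ≤ k ≤ n`, `0 ≤ τ_k(D) · τ_k(D^c) ≤ ⌊((n-k)/2)²⌋`. -/
theorem tauK_nordhaus_gaddum_prod {V : Type*} [Fintype V] {n k : ℕ}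
    (hn : Fintype.card V = n) (hk3 : 3 ≤ k) (hkn : k ≤ n) (D : Dgraph V) :
    0 ≤ D.tauK k * D.compl.tauK k ∧
      D.tauK k * D.compl.tauK k ≤ ⌊(((n : ℝ) - k) / 2) ^ 2⌋₊ := by
  refine ⟨Nat.zero_le _, ?_⟩
  obtain ⟨S, -, hS⟩ := Set.exists_subset_card_eq (s := (Set.univ : Set V)) (n := k)
    (by rwa [Set.ncard_univ, Nat.card_eq_fintype_card, hn])
  obtain ⟨r, hr⟩ := Set.nonempty_of_ncard_ne_zero (s := S) (by omega)
  have hsum := D.tauSr_add_tauSr_compl_add_ncard_le (hS ▸ hk3) hr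
  rw [hS, Nat.card_eq_fintype_card, hn] at hsum
  calc D.tauK k * D.compl.tauK k ≤ D.tauSr S r * D.compl.tauSr S r :=
        Nat.mul_le_mul (Nat.sInf_le ⟨S, r, hS, hr, rfl⟩) (Nat.sInf_le ⟨S, r, hS, hr, rfl⟩)
    _ ≤ ⌊(((n : ℝ) - k) / 2) ^ 2⌋₊ := Nat.mul_le_floor_sq_half_sub hsum
end
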